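/- Let E be a real Banach space and B : E × E → ℝ a continuous, symmetric, positive-definite bilinear form. Let F ⊆ E be a closed subspace of finite codimension such that its B-orthogonal F^⊥ = {x ∈ E : B(x, y) = 0 for all y ∈ F} is a topological complement of F in E (i.e. E = F ⊕ F^⊥ as topological direct sum). If F' is a linear subspace of E containing F, then F' is closed, F' has finite codimension in E, and its B-orthogonal (F')^⊥ is a topological complement of F' in E. -/

import Mathlib

/-!
Put `G = F^⊥` and `W = G ⊓ F'`. As `G ≃ E ⧸ F`, `W` is finite-dimensional, and the modular law
gives `F' = F ⊔ W`. Positivity makes `B` nondegenerate on `W`, so finite-dimensional duality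
splits `E = W ⊔ W^⊥`. Then `F'^⊥ = G ⊓ W^⊥`, and again by the modular law
`F' ⊔ F'^⊥ = F ⊔ (W ⊔ G ⊓ W^⊥) = F ⊔ G = E`. Closedness and finite codimension pass from `F`
to the larger subspace `F'`.
-/

/-- The `B`-orthogonal of a subspace `F` of `E`, for a continuous bilinear form `B`:
`F^⊥ = {x ∈ E : B(x, y) = 0 for all y ∈ F}`. -/
def Borthogonal {E : Type*} [NormedAddCommGroup E] [NormedSpace ℝ E]
    (B : E →L[ℝ] E →L[ℝ] ℝ) (F : Submodule ℝ E) : Submodule ℝ E where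
  carrier := {x | ∀ y ∈ F, B x y = 0}
  add_mem' := by
    intro a b ha hb
    intro y hy
    simp [ha y hy, hb y hy]
  zero_mem' := by simp
  smul_mem' := by
    intro c a ha y hy
    simp [ha y hy]

namespace Borthogonal

variable {E : Type*} [NormedAddCommGroup E] [NormedSpace ℝ E] (B : E →L[ℝ] E →L[ℝ] ℝ)

theorem mem_iff {F : Submodule ℝ E} {x : E} : x ∈ Borthogonal B F ↔ ∀ y ∈ F, B x y = 0 :=
  Iff.rfl

theorem isClosed (F : Submodule ℝ E) : IsClosed (Borthogonal B F : Set E) := by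
  have : (Borthogonal B F : Set E) = ⋂ y ∈ F, (fun x => B x y) ⁻¹' {0} := by
    ext x
    simp [mem_iff]
  rw [this]
  exact isClosed_biInter fun y _ => isClosed_singleton.preimage (B.flip y).continuous

theorem sup_eq_inf (F W : Submodule ℝ E) :
    Borthogonal B (F ⊔ W) = Borthogonal B F ⊓ Borthogonal B W := by
  ext x
  simp only [Submodule.mem_inf, mem_iff, Submodule.forall_mem_sup, map_add]
  exact ⟨fun h => ⟨fun y hy => by simpa using h y hy 0 W.zero_mem,
    fun z hz => by simpa using h 0 F.zero_mem z hz⟩,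
    fun h y hy z hz => by rw [h.1 y hy, h.2 z hz, add_zero]⟩

theorem disjoint_of_pos (hBpos : ∀ x : E, x ≠ 0 → 0 < B x x) (F : Submodule ℝ E) :
    Disjoint F (Borthogonal B F) := by
  rw [Submodule.disjoint_def]
  intro x hxF hx
  by_contra hx0
  exact (hBpos x hx0).ne' (hx x hxF)

theorem codisjoint_of_finiteDimensional (W : Submodule ℝ E) [FiniteDimensional ℝ W]
    (hW : Disjoint W (Borthogonal B W)) : Codisjoint W (Borthogonal B W) := by
  set b := LinearMap.BilinForm.restrict (ContinuousLinearMap.toLinearMap₁₂ B) W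
  have hb : b.Nondegenerate := by
    refine .ofSeparatingLeft fun w hw => ?_
    exact Subtype.ext <| (Submodule.disjoint_def.1 hW) w w.2 fun y hy => hw ⟨y, hy⟩
  rw [codisjoint_iff, Submodule.eq_top_iff']
  intro x
  obtain ⟨w, hw⟩ : ∃ w : W, ∀ u : W, B w u = B x u :=
    ⟨(b.toDual hb).symm ((B x).toLinearMap ∘ₗ W.subtype),
      fun u => LinearMap.BilinForm.apply_toDual_symm_apply (B := b) _ u⟩
  have hxw : x - w ∈ Borthogonal B W := fun y hy => by simp [hw ⟨y, hy⟩]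
  simpa using Submodule.add_mem_sup w.2 hxw

theorem codisjoint_sup {F W : Submodule ℝ E} (hF : Codisjoint F (Borthogonal B F))
    (hWF : W ≤ Borthogonal B F) (hW : Codisjoint W (Borthogonal B W)) :
    Codisjoint (F ⊔ W) (Borthogonal B (F ⊔ W)) := by
  rw [codisjoint_iff, sup_eq_inf, sup_assoc, inf_comm, ← sup_inf_assoc_of_le _ hWF, hW.eq_top,
    top_inf_eq, hF.eq_top]

end Borthogonal

theorem superspace_closed_finite_codim_complemented_general
    (E : Type*) [NormedAddCommGroup E] [NormedSpace ℝ E]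
    (B : E →L[ℝ] E →L[ℝ] ℝ)
    (hBpos : ∀ x : E, x ≠ 0 → 0 < B x x)
    (F : Submodule ℝ E)
    (hFclosed : IsClosed (F : Set E))
    (hFcodim : FiniteDimensional ℝ (E ⧸ F))
    (hcompl : IsCompl F (Borthogonal B F))
    (F' : Submodule ℝ E) (hFF' : F ≤ F') :
    IsClosed (F' : Set E) ∧
    FiniteDimensional ℝ (E ⧸ F') ∧
    IsCompl F' (Borthogonal B F') ∧
    IsClosed ((Borthogonal B F' : Submodule ℝ E) : Set E) := by
  set W := Borthogonal B F ⊓ F'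
  have : FiniteDimensional ℝ (Borthogonal B F) :=
    (Submodule.quotientEquivOfIsCompl F _ hcompl).finiteDimensional
  have : FiniteDimensional ℝ W := Submodule.finiteDimensional_of_le inf_le_left
  have hF' : F ⊔ W = F' := by
    rw [← sup_inf_assoc_of_le _ hFF', hcompl.sup_eq_top, top_inf_eq]
  have hW : Codisjoint W (Borthogonal B W) :=
    Borthogonal.codisjoint_of_finiteDimensional B W (Borthogonal.disjoint_of_pos B hBpos W)
  refine ⟨Submodule.isClosed_mono_of_finiteDimensional_quotient hFclosed hFF',
    Submodule.CoFG.of_le hFF' hFcodim, ⟨Borthogonal.disjoint_of_pos B hBpos F', ?_⟩,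
    Borthogonal.isClosed B F'⟩
  rw [← hF']
  exact Borthogonal.codisjoint_sup B hcompl.codisjoint inf_le_left hW

/-- **Supplemented subspaces of finite codimension.**
Let `E` be a real Banach space and `B` a continuous, symmetric, positive-definite
bilinear form on `E`. Let `F ⊆ E` be a closed subspace of finite codimension whose
`B`-orthogonal `F^⊥` is a topological complement of `F` in `E` (i.e. `F` and `F^⊥` are
complementary and `F^⊥` is closed, so the projections are continuous by the open
mapping theorem). Then every subspace `F'` containing `F` is closed, of finite
codimension in `E`, and its `B`-orthogonal is a topological complement of `F'`. -/
theorem superspace_closed_finite_codim_complemented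
    (E : Type*) [NormedAddCommGroup E] [NormedSpace ℝ E] [CompleteSpace E]
    (B : E →L[ℝ] E →L[ℝ] ℝ)
    (hBsym : ∀ x y : E, B x y = B y x)
    (hBpos : ∀ x : E, x ≠ 0 → 0 < B x x)
    (F : Submodule ℝ E)
    (hFclosed : IsClosed (F : Set E))
    (hFcodim : FiniteDimensional ℝ (E ⧸ F))
    (hcompl : IsCompl F (Borthogonal B F))
    (horthclosed : IsClosed ((Borthogonal B F : Submodule ℝ E) : Set E))
    (F' : Submodule ℝ E) (hFF' : F ≤ F') :
    IsClosed (F' : Set E) ∧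
    FiniteDimensional ℝ (E ⧸ F') ∧
    IsCompl F' (Borthogonal B F') ∧
    IsClosed ((Borthogonal B F' : Submodule ℝ E) : Set E) :=
  superspace_closed_finite_codim_complemented_general E B hBpos F hFclosed hFcodim hcompl F' hFF'
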